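/- arXiv:2408.07656 — 2 statements merged into one kernel-verified Lean document; each statement's English description precedes it below -/
import Mathlib

section
/- Let n ≥ 2 and let κ = (κ_1,…,κ_n) ∈ K_2 be ordered decreasingly, κ_1 ≥ κ_2 ≥ ⋯ ≥ κ_n. Then S_2(κ)/S_1(κ) ≤ S_1(κ) − κ_1 ≤ ((n−1)/n)·S_1(κ). -/
open Finset

/-- The `k`-th elementary symmetric polynomial of `x ∈ ℝ^m`. -/
noncomputable def esymm {m : ℕ} (k : ℕ) (x : Fin m → ℝ) : ℝ :=
  ∑ t ∈ Finset.powersetCard k (Finset.univ : Finset (Fin m)), ∏ i ∈ t, x i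

/-!
Both inequalities are elementary once `S_1 ^ 2 = ∑ κ_i ^ 2 + 2 S_2` (Newton's identity in degree
two). It gives `S_1 (S_1 - κ_i) - S_2 = ((S_1 - κ_i) ^ 2 + ∑_{j ≠ i} κ_j ^ 2) / 2 ≥ 0` for every
index `i`, which is the left inequality after dividing by `S_1 > 0`. The right one is
`S_1 ≤ n κ_1`: the largest entry is at least the mean.
-/

theorem esymm_eq_eval {m : ℕ} (k : ℕ) (x : Fin m → ℝ) :
    esymm k x = MvPolynomial.eval x (MvPolynomial.esymm (Fin m) ℝ k) := by
  simp [esymm, MvPolynomial.esymm]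

theorem esymm_one_eq_sum {m : ℕ} (x : Fin m → ℝ) : esymm 1 x = ∑ i, x i := by
  simp [esymm_eq_eval]

theorem esymm_one_sq {m : ℕ} (x : Fin m → ℝ) :
    esymm 1 x ^ 2 = ∑ i, x i ^ 2 + 2 * esymm 2 x := by
  have newton : 2 * esymm 2 x = -(∑ i, x i ^ 2 - (∑ i, x i) * ∑ i, x i) := by
    simpa [MvPolynomial.psum, Nat.sum_antidiagonal_eq_sum_range_succ_mk, sum_range_succ,
      ← esymm_eq_eval, Odd.neg_one_pow (by decide : Odd 3), sub_eq_add_neg] using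
      congrArg (MvPolynomial.eval x) (MvPolynomial.mul_esymm_eq_sum (Fin m) ℝ 2)
  rw [esymm_one_eq_sum]
  linarith

theorem esymm_two_le_esymm_one_mul_sub {m : ℕ} (x : Fin m → ℝ) (i : Fin m) :
    esymm 2 x ≤ esymm 1 x * (esymm 1 x - x i) := by
  have hsq : x i ^ 2 ≤ ∑ j, x j ^ 2 :=
    single_le_sum (fun j _ => sq_nonneg (x j)) (mem_univ i)
  nlinarith [esymm_one_sq x, sq_nonneg (esymm 1 x - x i)]

theorem esymm_one_le_card_mul_of_forall_le {m : ℕ} (x : Fin m → ℝ) {i : Fin m}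
    (hmax : ∀ j, x j ≤ x i) : esymm 1 x ≤ m * x i := by
  calc esymm 1 x = ∑ j, x j := esymm_one_eq_sum x
    _ ≤ ∑ _j : Fin m, x i := sum_le_sum fun j _ => hmax j
    _ = m * x i := by simp

theorem stmt_2 (n : ℕ) (hn : 2 ≤ n) (κ : Fin n → ℝ)
    (hord : ∀ i j : Fin n, i ≤ j → κ j ≤ κ i)
    (h1 : 0 < esymm 1 κ) :
    esymm 2 κ / esymm 1 κ ≤ esymm 1 κ - κ ⟨0, by omega⟩ ∧
    esymm 1 κ - κ ⟨0, by omega⟩ ≤ (((n : ℝ) - 1) / n) * esymm 1 κ := by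
  have hn_pos : (0 : ℝ) < n := by positivity
  constructor
  · rw [div_le_iff₀ h1, mul_comm]
    exact esymm_two_le_esymm_one_mul_sub κ _
  · have hmean := esymm_one_le_card_mul_of_forall_le κ fun j =>
      hord ⟨0, by omega⟩ j (Nat.zero_le j.val)
    rw [div_mul_eq_mul_div, le_div_iff₀ hn_pos]
    linarith
end

section
/- Let n ≥ 2, let κ = (κ_1,…,κ_n) ∈ K_2 be ordered decreasingly, κ_1 ≥ ⋯ ≥ κ_n, and let δ be a real number with 0 < δ ≤ 3n/(2(n−1)). Then δ·(S_1(κ) − κ_n) < 3·S_1(κ). -/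
/-! Write `s = S₁(κ)` and `t = κⱼ` for any index `j`. Since `2 S₂ = s² - ∑ κᵢ² > 0`, Cauchy–Schwarz
on the other `n - 1` coordinates gives `(s - t)² < (n - 1)(s - t)(s + t)`. As `s + t = 2s - (s - t)`
with `s > 0`, this forces `s - t > 0`, and dividing by it yields `(n - 2) s + n t > 0`, i.e.
`n (s - t) < 2 (n - 1) s`, which is the claim for `δ = 3n / (2(n - 1))`. -/

open Finset

section

variable {m : ℕ} (x : Fin m → ℝ)

lemma esymm_eq_eval_esymm (k : ℕ) :
    esymm k x = MvPolynomial.eval x (MvPolynomial.esymm (Fin m) ℝ k) := by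
  simp [esymm, MvPolynomial.esymm, map_sum, map_prod]

lemma esymm_one : esymm 1 x = ∑ i, x i := by
  simp [esymm, powersetCard_one]

lemma sq_sum_eq_sum_sq_add_two_mul_esymm_two :
    (∑ i, x i) ^ 2 = ∑ i, x i ^ 2 + 2 * esymm 2 x := by
  have hpairs : {a ∈ antidiagonal 2 | a.1 < 2} = {(0, 2), (1, 1)} := by decide
  have newton := congrArg (MvPolynomial.eval x) (MvPolynomial.mul_esymm_eq_sum (Fin m) ℝ 2)
  rw [hpairs, sum_pair (by decide)] at newton
  simp only [Nat.cast_ofNat, map_mul, MvPolynomial.eval_ofNat, ← esymm_eq_eval_esymm, pow_zero,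
    MvPolynomial.esymm_zero, mul_one, MvPolynomial.psum, one_mul, pow_one, MvPolynomial.esymm_one,
    neg_mul, map_pow, map_neg, map_one, map_add, map_sum, MvPolynomial.eval_X] at newton
  linear_combination -newton

lemma esymm_eq_zero_of_lt {k : ℕ} (hk : m < k) : esymm k x = 0 := by
  rw [esymm, powersetCard_eq_empty.2 (by simpa using hk), sum_empty]

lemma sq_sum_sub_le (j : Fin m) :
    (∑ i, x i - x j) ^ 2 ≤ (m - 1) * (∑ i, x i ^ 2 - x j ^ 2) := by
  have hcard : (#(univ.erase j) : ℝ) = m - 1 := by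
    rw [card_erase_of_mem (mem_univ j), card_univ, Fintype.card_fin,
      Nat.cast_sub (Nat.one_le_iff_ne_zero.2 (Fin.pos j).ne'), Nat.cast_one]
  rw [← sum_erase_eq_sub (mem_univ j), ← sum_erase_eq_sub (f := fun i => x i ^ 2) (mem_univ j),
    ← hcard]
  exact sq_sum_le_card_mul_sum_sq

variable {x} (h2 : 0 < esymm 2 x) (j : Fin m)
include h2

lemma sq_esymm_one_sub_lt :
    (esymm 1 x - x j) ^ 2 < (m - 1) * ((esymm 1 x - x j) * (esymm 1 x + x j)) := by
  have hsq := sq_sum_eq_sum_sq_add_two_mul_esymm_two x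
  have hcs := sq_sum_sub_le x j
  have hm : (2 : ℝ) ≤ m := by
    by_contra! hm
    exact h2.ne' (esymm_eq_zero_of_lt x (by exact_mod_cast hm))
  rw [esymm_one]
  nlinarith

lemma esymm_one_sub_pos (h1 : 0 < esymm 1 x) : 0 < esymm 1 x - x j := by
  have key := sq_esymm_one_sub_lt h2 j
  by_contra! hle
  have hm : (1 : ℝ) ≤ m := by exact_mod_cast Nat.one_le_iff_ne_zero.2 (Fin.pos j).ne'
  nlinarith [sq_nonneg (esymm 1 x - x j),
    mul_nonpos_of_nonpos_of_nonneg hle (by linarith : 0 ≤ esymm 1 x + x j)]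

end

lemma sub_two_mul_esymm_one_add_mul_pos {m : ℕ} {x : Fin m → ℝ} (h1 : 0 < esymm 1 x)
    (h2 : 0 < esymm 2 x) (j : Fin m) : 0 < (m - 2) * esymm 1 x + m * x j := by
  have hsq := sq_esymm_one_sub_lt h2 j
  have hpos := esymm_one_sub_pos h2 j h1
  rw [sq, mul_left_comm] at hsq
  have := lt_of_mul_lt_mul_left hsq hpos.le
  linarith

theorem stmt_16 (n : ℕ) (hn : 2 ≤ n) (κ : Fin n → ℝ)
    (h1 : 0 < esymm 1 κ) (h2 : 0 < esymm 2 κ)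
    (δ : ℝ) (hδ : δ ≤ 3 * (n : ℝ) / (2 * ((n : ℝ) - 1))) :
    δ * (esymm 1 κ - κ ⟨n - 1, by omega⟩) < 3 * esymm 1 κ := by
  set last : Fin n := ⟨n - 1, by omega⟩
  have hn' : (2 : ℝ) ≤ n := by exact_mod_cast hn
  have hpos := esymm_one_sub_pos h2 last h1
  have key := sub_two_mul_esymm_one_add_mul_pos h1 h2 last
  calc δ * (esymm 1 κ - κ last)
      ≤ 3 * n / (2 * (n - 1)) * (esymm 1 κ - κ last) :=
        mul_le_mul_of_nonneg_right hδ hpos.le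
    _ < 3 * esymm 1 κ := by
        rw [div_mul_eq_mul_div, div_lt_iff₀ (by linarith)]
        linarith
end
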